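/- arXiv:1908.07620 — 5 statements merged into one kernel-verified Lean document; each statement's English description precedes it below -/
import Mathlib

section
/- Let G be a finite abelian group whose order is not divisible by the characteristic of the field K, let θ : G × G → K^× be a nondegenerate bicharacter, let H := K[G] be the group algebra with coproduct Δ(g) = g ⊗ g, and set R := (1/|G|) ∑_{g,g' ∈ G} θ(g,g') g ⊗ g' ∈ H ⊗ H. Then R is a universal R-matrix for H; explicitly: (i) R is invertible in H ⊗ H with inverse (1/|G|) ∑_{g,g' ∈ G} θ(g⁻¹,g') g ⊗ g'; (ii) writing R = ∑ᵢ aᵢ ⊗ bᵢ, one has (Δ ⊗ id)(R) = ∑_{i,j} aᵢ ⊗ a_j ⊗ bᵢb_j; (iii) (id ⊗ Δ)(R) = ∑_{i,j} aᵢa_j ⊗ b_j ⊗ bᵢ; (iv) for all h ∈ H, ∑ᵢ h₂aᵢ ⊗ h₁bᵢ = ∑ᵢ aᵢh₁ ⊗ bᵢh₂, where Δ(h) = h₁ ⊗ h₂ in Sweedler notation. -/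
open TensorProduct

/-!
Put `N = |G|` and `e_g = N⁻¹ ∑_h θ(g,h) h`, the idempotent of `K[G]` attached to the character
`θ(g,-)⁻¹`. Orthogonality of characters gives `e_g e_k = δ_{gk} e_g`, and `∑_g e_g = 1` once `θ`
is known to be nondegenerate in its second argument as well, which follows by inverting the
character table `(θ(g,h))_{g,h}`. Now `R = ∑_g g ⊗ e_g` and `R' = ∑_g g⁻¹ ⊗ e_g`, so
`R R' = ∑_{g,k} g k⁻¹ ⊗ e_g e_k = 1 ⊗ ∑_g e_g = 1`, and the right-hand side of (ii) is
`∑_{g,h} g ⊗ h ⊗ e_g e_h = ∑_g g ⊗ g ⊗ e_g = (Δ ⊗ id)(R)`. Part (iii) is the same computation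
for the transposed bicharacter, and (iv) holds since `K[G] ⊗ K[G]` is commutative and `Δ` is
cocommutative.
-/

/-- The coproduct of the group algebra `K[G]`, determined by `Δ(g) = g ⊗ g`. -/
noncomputable def groupAlgebraComul (K : Type*) [Field K] (G : Type*) [CommGroup G] :
    MonoidAlgebra K G →ₗ[K] MonoidAlgebra K G ⊗[K] MonoidAlgebra K G :=
  (Finsupp.lsum K fun g => LinearMap.toSpanSingleton K _
    (MonoidAlgebra.of K G g ⊗ₜ[K] MonoidAlgebra.of K G g)) ∘ₗ
      (MonoidAlgebra.coeffLinearEquiv K).toLinearMap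

section GroupAlgebraComul

variable {K G : Type*} [Field K] [CommGroup G]

theorem groupAlgebraComul_of (g : G) :
    groupAlgebraComul K G (MonoidAlgebra.of K G g) =
      MonoidAlgebra.of K G g ⊗ₜ[K] MonoidAlgebra.of K G g := by
  simp [groupAlgebraComul]

theorem comm_groupAlgebraComul (x : MonoidAlgebra K G) :
    TensorProduct.comm K _ _ (groupAlgebraComul K G x) = groupAlgebraComul K G x := by
  have : (TensorProduct.comm K _ _).toLinearMap ∘ₗ groupAlgebraComul K G =
      groupAlgebraComul K G :=
    MonoidAlgebra.lhom_ext' fun g => LinearMap.ext_ring <| by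
      change TensorProduct.comm K _ _ (groupAlgebraComul K G (MonoidAlgebra.of K G g)) =
        groupAlgebraComul K G (MonoidAlgebra.of K G g)
      rw [groupAlgebraComul_of, comm_tmul]
  exact LinearMap.congr_fun this x

end GroupAlgebraComul

namespace MonoidHom

variable {K G : Type*} [Field K] [CommGroup G] [Fintype G] (θ : G →* G →* Kˣ)

theorem sum_apply_right (hθ : Function.Injective θ) (g : G) [Decidable (g = 1)] :
    ∑ h, (θ g h : K) = if g = 1 then (Fintype.card G : K) else 0 := by
  classical
  have hone : (Units.coeHom K).comp (θ g) = 1 ↔ g = 1 := by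
    rw [← hθ.eq_iff, map_one, ← (Units.coeHom K).cancel_left Units.val_injective,
      MonoidHom.comp_one]
  have key := sum_hom_units ((Units.coeHom K).comp (θ g))
  simp only [hone, apply_ite (Nat.cast : ℕ → K), Nat.cast_zero] at key
  exact key

theorem sum_apply_mul_inv_apply (hθ : Function.Injective θ) (hN : (Fintype.card G : K) ≠ 0)
    (g k : G) [Decidable (g = k)] :
    (Fintype.card G : K)⁻¹ * ∑ h, (θ g h : K) * (θ k h : K)⁻¹ = if g = k then 1 else 0 := by
  classical
  have hmul : ∀ h, (θ g h : K) * (θ k h : K)⁻¹ = θ (g * k⁻¹) h := fun h => by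
    simp only [map_mul, map_inv, mul_apply, inv_apply, Units.val_mul, Units.val_inv_eq_inv_val]
  simp only [hmul, sum_apply_right θ hθ, mul_inv_eq_one]
  split_ifs <;> simp [hN]

theorem sum_apply_left (hθ : Function.Injective θ) (hN : (Fintype.card G : K) ≠ 0) (h : G)
    [Decidable (h = 1)] :
    ∑ g, (θ g h : K) = if h = 1 then (Fintype.card G : K) else 0 := by
  classical
  -- Row orthogonality says `A * B = 1`; then `B * A = 1` too, and row `1` of it is the claim.
  let A : Matrix G G K := fun g h => θ g h
  let B : Matrix G G K := fun h k => (Fintype.card G : K)⁻¹ * (θ k h : K)⁻¹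
  have hAB : A * B = 1 := by
    ext g k
    rw [Matrix.mul_apply, Matrix.one_apply, ← sum_apply_mul_inv_apply θ hθ hN, Finset.mul_sum]
    exact Finset.sum_congr rfl fun _ _ => mul_left_comm _ _ _
  have hBA : (B * A) 1 h = (1 : Matrix G G K) 1 h := by rw [mul_eq_one_comm.mp hAB]
  rw [Matrix.mul_apply, Matrix.one_apply, eq_comm (a := (1 : G))] at hBA
  simp only [A, B, map_one, Units.val_one, inv_one, mul_one, ← Finset.mul_sum] at hBA
  rw [← mul_right_inj' (inv_ne_zero hN), hBA]
  split_ifs <;> simp [hN]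

theorem injective_flip (hθ : Function.Injective θ) (hN : (Fintype.card G : K) ≠ 0) :
    Function.Injective θ.flip := by
  classical
  refine (injective_iff_map_eq_one _).2 fun h hh => by_contra fun hne => hN ?_
  have := sum_apply_left θ hθ hN h
  simpa [if_neg hne, ← flip_apply θ, hh] using this

noncomputable def charIdempotent (g : G) : MonoidAlgebra K G :=
  (Fintype.card G : K)⁻¹ • ∑ h, (θ g h : K) • MonoidAlgebra.of K G h

theorem charIdempotent_inv (g : G) : charIdempotent θ⁻¹ g = charIdempotent θ g⁻¹ := by
  simp only [charIdempotent, inv_apply, map_inv]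

theorem of_mul_charIdempotent (x g : G) :
    MonoidAlgebra.of K G x * charIdempotent θ g = (θ g x : K)⁻¹ • charIdempotent θ g := by
  have hreindex : ∑ h, (θ g h : K) • MonoidAlgebra.of K G (x * h)
      = ∑ h, (θ g (x⁻¹ * h) : K) • MonoidAlgebra.of K G h :=
    Fintype.sum_equiv (Equiv.mulLeft x) _ _ fun h => by simp
  have hcoeff : ∀ h, (θ g (x⁻¹ * h) : K) = (θ g x : K)⁻¹ * θ g h := fun h => by
    simp only [map_mul, map_inv, Units.val_mul, Units.val_inv_eq_inv_val]
  rw [charIdempotent, mul_smul_comm, Finset.mul_sum]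
  simp only [mul_smul_comm, ← map_mul, hreindex, hcoeff, mul_smul, ← Finset.smul_sum]
  rw [smul_comm]

theorem charIdempotent_mul_charIdempotent (hθ : Function.Injective θ)
    (hN : (Fintype.card G : K) ≠ 0) (g k : G) [Decidable (g = k)] :
    charIdempotent θ g * charIdempotent θ k = if g = k then charIdempotent θ g else 0 := by
  calc charIdempotent θ g * charIdempotent θ k
      = ((Fintype.card G : K)⁻¹ * ∑ h, (θ g h : K) * (θ k h : K)⁻¹) • charIdempotent θ k := by
        rw [charIdempotent, smul_mul_assoc, Finset.sum_mul]
        simp only [smul_mul_assoc, of_mul_charIdempotent, smul_smul]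
        rw [← Finset.sum_smul, smul_smul]
    _ = if g = k then charIdempotent θ g else 0 := by
        rw [sum_apply_mul_inv_apply θ hθ hN]
        split_ifs with hgk <;> simp [hgk]

theorem sum_charIdempotent (hθ : Function.Injective θ) (hN : (Fintype.card G : K) ≠ 0) :
    ∑ g, charIdempotent θ g = 1 := by
  classical
  simp only [charIdempotent, ← Finset.smul_sum]
  rw [Finset.sum_comm]
  simp only [← Finset.sum_smul, sum_apply_left θ hθ hN, ite_smul, zero_smul,
    Finset.sum_ite_eq', Finset.mem_univ, if_true, smul_smul, inv_mul_cancel₀ hN, one_smul]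
  exact map_one _

theorem charIdempotent_mul_charIdempotent_eq_sum (g k : G) :
    charIdempotent θ g * charIdempotent θ k = ((Fintype.card G : K) * (Fintype.card G : K))⁻¹ •
      ∑ g', ∑ k', ((θ g g' : K) * (θ k k' : K)) •
        (MonoidAlgebra.of K G g' * MonoidAlgebra.of K G k') := by
  simp only [charIdempotent, smul_mul_smul_comm, Finset.sum_mul_sum, mul_inv]

section TensorProduct

variable {M : Type*} [AddCommGroup M] [Module K M]

theorem tmul_charIdempotent (m : M) (g : G) :
    m ⊗ₜ[K] charIdempotent θ g =
      (Fintype.card G : K)⁻¹ • ∑ h, (θ g h : K) • (m ⊗ₜ[K] MonoidAlgebra.of K G h) := by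
  simp only [charIdempotent, tmul_smul, tmul_sum]

theorem charIdempotent_tmul (m : M) (g : G) :
    charIdempotent θ g ⊗ₜ[K] m =
      (Fintype.card G : K)⁻¹ • ∑ h, (θ g h : K) • (MonoidAlgebra.of K G h ⊗ₜ[K] m) := by
  simp only [charIdempotent, ← smul_tmul', sum_tmul]

theorem sum_tmul_charIdempotent_mul_charIdempotent (x : G → G → M) :
    ∑ g, ∑ h, x g h ⊗ₜ[K] (charIdempotent θ g * charIdempotent θ h) =
      ((Fintype.card G : K) * (Fintype.card G : K))⁻¹ •
        ∑ g, ∑ g', ∑ h, ∑ h', ((θ g g' : K) * (θ h h' : K)) •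
          (x g h ⊗ₜ[K] (MonoidAlgebra.of K G g' * MonoidAlgebra.of K G h')) := by
  simp only [charIdempotent_mul_charIdempotent_eq_sum, tmul_smul, tmul_sum, Finset.smul_sum]
  exact Finset.sum_congr rfl fun g _ => Finset.sum_comm

theorem sum_charIdempotent_mul_charIdempotent_tmul (x : G → G → M) :
    ∑ g', ∑ h', (charIdempotent θ.flip g' * charIdempotent θ.flip h') ⊗ₜ[K] x g' h' =
      ((Fintype.card G : K) * (Fintype.card G : K))⁻¹ •
        ∑ g, ∑ g', ∑ h, ∑ h', ((θ g g' : K) * (θ h h' : K)) •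
          ((MonoidAlgebra.of K G g * MonoidAlgebra.of K G h) ⊗ₜ[K] x g' h') := by
  simp only [charIdempotent_mul_charIdempotent_eq_sum, flip_apply, ← smul_tmul', sum_tmul,
    Finset.smul_sum]
  rw [Finset.sum_congr rfl fun g' _ => Finset.sum_comm, Finset.sum_comm]
  exact Finset.sum_congr rfl fun g _ => Finset.sum_congr rfl fun g' _ => Finset.sum_comm

end TensorProduct

noncomputable def rMatrix : MonoidAlgebra K G ⊗[K] MonoidAlgebra K G :=
  ∑ g, MonoidAlgebra.of K G g ⊗ₜ[K] charIdempotent θ g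

theorem rMatrix_eq_sum :
    rMatrix θ = (Fintype.card G : K)⁻¹ •
      ∑ g, ∑ g', (θ g g' : K) • (MonoidAlgebra.of K G g ⊗ₜ[K] MonoidAlgebra.of K G g') := by
  simp only [rMatrix, tmul_charIdempotent, Finset.smul_sum]

theorem rMatrix_eq_sum_charIdempotent_flip_tmul :
    rMatrix θ = ∑ g', charIdempotent θ.flip g' ⊗ₜ[K] MonoidAlgebra.of K G g' := by
  simp only [rMatrix_eq_sum, charIdempotent_tmul, flip_apply, Finset.smul_sum]
  exact Finset.sum_comm

theorem rMatrix_inv_eq_sum :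
    rMatrix θ⁻¹ = (Fintype.card G : K)⁻¹ •
      ∑ g, ∑ g', (θ g⁻¹ g' : K) • (MonoidAlgebra.of K G g ⊗ₜ[K] MonoidAlgebra.of K G g') := by
  simp only [rMatrix_eq_sum, inv_apply, map_inv]

theorem rMatrix_mul_rMatrix_inv (hθ : Function.Injective θ) (hN : (Fintype.card G : K) ≠ 0) :
    rMatrix θ * rMatrix θ⁻¹ = 1 := by
  classical
  have hinv : rMatrix θ⁻¹ = ∑ k, MonoidAlgebra.of K G k⁻¹ ⊗ₜ[K] charIdempotent θ k := by
    simp only [rMatrix, charIdempotent_inv]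
    exact Fintype.sum_equiv (Equiv.inv G) _ _ fun k => by simp
  rw [hinv, rMatrix, Finset.sum_mul_sum]
  simp only [Algebra.TensorProduct.tmul_mul_tmul, charIdempotent_mul_charIdempotent θ hθ hN,
    tmul_ite, Finset.sum_ite_eq, Finset.mem_univ, if_true, ← map_mul, mul_inv_cancel, map_one,
    ← tmul_sum, sum_charIdempotent θ hθ hN, Algebra.TensorProduct.one_def]

theorem map_groupAlgebraComul_id_rMatrix (hθ : Function.Injective θ)
    (hN : (Fintype.card G : K) ≠ 0) :
    map (groupAlgebraComul K G) LinearMap.id (rMatrix θ) =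
      ((Fintype.card G : K) * (Fintype.card G : K))⁻¹ •
        ∑ g, ∑ g', ∑ h, ∑ h', ((θ g g' : K) * (θ h h' : K)) •
          ((MonoidAlgebra.of K G g ⊗ₜ[K] MonoidAlgebra.of K G h) ⊗ₜ[K]
            (MonoidAlgebra.of K G g' * MonoidAlgebra.of K G h')) := by
  classical
  refine Eq.trans ?_ (sum_tmul_charIdempotent_mul_charIdempotent θ fun g h =>
    MonoidAlgebra.of K G g ⊗ₜ[K] MonoidAlgebra.of K G h)
  simp only [charIdempotent_mul_charIdempotent θ hθ hN, tmul_ite, Finset.sum_ite_eq,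
    Finset.mem_univ, if_true, rMatrix, map_sum, map_tmul, groupAlgebraComul_of, LinearMap.id_apply]

theorem map_id_groupAlgebraComul_rMatrix (hθ : Function.Injective θ)
    (hN : (Fintype.card G : K) ≠ 0) :
    map LinearMap.id (groupAlgebraComul K G) (rMatrix θ) =
      ((Fintype.card G : K) * (Fintype.card G : K))⁻¹ •
        ∑ g, ∑ g', ∑ h, ∑ h', ((θ g g' : K) * (θ h h' : K)) •
          ((MonoidAlgebra.of K G g * MonoidAlgebra.of K G h) ⊗ₜ[K]
            (MonoidAlgebra.of K G h' ⊗ₜ[K] MonoidAlgebra.of K G g')) := by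
  classical
  refine Eq.trans ?_ (sum_charIdempotent_mul_charIdempotent_tmul θ fun g' h' =>
    MonoidAlgebra.of K G h' ⊗ₜ[K] MonoidAlgebra.of K G g')
  simp only [charIdempotent_mul_charIdempotent θ.flip (injective_flip θ hθ hN) hN, ite_tmul,
    Finset.sum_ite_eq, Finset.mem_univ, if_true, rMatrix_eq_sum_charIdempotent_flip_tmul, map_sum,
    map_tmul, groupAlgebraComul_of, LinearMap.id_apply]

end MonoidHom

theorem stmt_1 {K : Type*} [Field K] {G : Type*} [CommGroup G] [Fintype G]
    (hchar : ¬ (ringChar K ∣ Fintype.card G))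
    (θ : G → G → Kˣ)
    (hbil_right : ∀ g g' g'' : G, θ g (g' * g'') = θ g g' * θ g g'')
    (hbil_left : ∀ g g' g'' : G, θ (g * g') g'' = θ g g'' * θ g' g'')
    (hnondeg : ∀ g : G, (∀ g' : G, θ g g' = 1) → g = 1)
    (R R' : MonoidAlgebra K G ⊗[K] MonoidAlgebra K G)
    (hR : R = (Fintype.card G : K)⁻¹ •
      ∑ g : G, ∑ g' : G, (θ g g' : K) •
        (MonoidAlgebra.of K G g ⊗ₜ[K] MonoidAlgebra.of K G g'))
    (hR' : R' = (Fintype.card G : K)⁻¹ •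
      ∑ g : G, ∑ g' : G, (θ g⁻¹ g' : K) •
        (MonoidAlgebra.of K G g ⊗ₜ[K] MonoidAlgebra.of K G g')) :
    -- (i) `R` is invertible with inverse `R'`
    (R * R' = 1 ∧ R' * R = 1) ∧
    -- (ii) `(Δ ⊗ id)(R) = ∑ aᵢ ⊗ aⱼ ⊗ bᵢbⱼ`
    (TensorProduct.map (groupAlgebraComul K G) LinearMap.id R =
      ((Fintype.card G : K) * (Fintype.card G : K))⁻¹ •
        ∑ g : G, ∑ g' : G, ∑ h : G, ∑ h' : G,
          ((θ g g' : K) * (θ h h' : K)) •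
            ((MonoidAlgebra.of K G g ⊗ₜ[K] MonoidAlgebra.of K G h) ⊗ₜ[K]
              (MonoidAlgebra.of K G g' * MonoidAlgebra.of K G h'))) ∧
    -- (iii) `(id ⊗ Δ)(R) = ∑ aᵢaⱼ ⊗ bⱼ ⊗ bᵢ`
    (TensorProduct.map LinearMap.id (groupAlgebraComul K G) R =
      ((Fintype.card G : K) * (Fintype.card G : K))⁻¹ •
        ∑ g : G, ∑ g' : G, ∑ h : G, ∑ h' : G,
          ((θ g g' : K) * (θ h h' : K)) •
            ((MonoidAlgebra.of K G g * MonoidAlgebra.of K G h) ⊗ₜ[K]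
              (MonoidAlgebra.of K G h' ⊗ₜ[K] MonoidAlgebra.of K G g'))) ∧
    -- (iv) `∑ h₂aᵢ ⊗ h₁bᵢ = ∑ aᵢh₁ ⊗ bᵢh₂`
    (∀ h : MonoidAlgebra K G,
      (TensorProduct.comm K (MonoidAlgebra K G) (MonoidAlgebra K G))
          (groupAlgebraComul K G h) * R =
        R * groupAlgebraComul K G h) := by
  have hN : (Fintype.card G : K) ≠ 0 := by
    rwa [Ne, CharP.cast_eq_zero_iff K (ringChar K)]
  let Θ : G →* G →* Kˣ :=
    MonoidHom.mk' (fun g => MonoidHom.mk' (θ g) (hbil_right g))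
      fun g g' => MonoidHom.ext (hbil_left g g')
  have hΘ : Function.Injective Θ :=
    (injective_iff_map_eq_one Θ).2 fun g hg => hnondeg g (DFunLike.congr_fun hg)
  obtain rfl : R = Θ.rMatrix := hR.trans Θ.rMatrix_eq_sum.symm
  obtain rfl : R' = Θ⁻¹.rMatrix := hR'.trans Θ.rMatrix_inv_eq_sum.symm
  have hRR' := Θ.rMatrix_mul_rMatrix_inv hΘ hN
  exact ⟨⟨hRR', (mul_comm _ _).trans hRR'⟩, Θ.map_groupAlgebraComul_id_rMatrix hΘ hN,
    Θ.map_id_groupAlgebraComul_rMatrix hΘ hN,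
    fun h => by rw [comm_groupAlgebraComul, mul_comm]⟩
end

section
/- The commutative K-algebra A generated by commuting elements x, y subject to x⁴ = 1 and y² = (1/2)(1 + ζx + x² − ζx³) is isomorphic as a K-algebra to K⁸ (the product of eight copies of K). In particular A is eight-dimensional and split semisimple. -/
open MvPolynomial

/-- The defining ideal of the first example: generated by `x⁴ - 1` and
`y² - (1/2)(1 + ζx + x² - ζx³)`. -/
noncomputable def firstRelIdeal (K : Type*) [Field K] (ζ : K) :
    Ideal (MvPolynomial (Fin 2) K) :=
  Ideal.span {X 0 ^ 4 - 1,
    X 1 ^ 2 - C ((2 : K)⁻¹) * (1 + C ζ * X 0 + X 0 ^ 2 - C ζ * X 0 ^ 3)}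

/-- The first example: the commutative `K`-algebra generated by commuting elements `x`, `y`
subject to `x⁴ = 1` and `y² = (1/2)(1 + ζx + x² - ζx³)`. -/
abbrev FirstAlg (K : Type*) [Field K] (ζ : K) : Type _ :=
  MvPolynomial (Fin 2) K ⧸ firstRelIdeal K ζ

/-- The eight points of `K²` where both relations vanish. -/
noncomputable def firstPts {K : Type*} [Field K] (ξ u : K) : Fin 8 → Fin 2 → K :=
  ![![1, 1], ![1, -1], ![-1, 1], ![-1, -1],
    ![ξ ^ 2, ξ * u], ![ξ ^ 2, -(ξ * u)], ![-ξ ^ 2, ξ ^ 3 * u], ![-ξ ^ 2, -(ξ ^ 3 * u)]]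

/-- Joint evaluation at the eight points. -/
noncomputable def firstΦ {K : Type*} [Field K] (ξ u : K) :
    MvPolynomial (Fin 2) K →ₐ[K] (Fin 8 → K) :=
  Pi.algHom K _ (fun i => MvPolynomial.aeval (firstPts ξ u i))

set_option maxHeartbeats 1000000 in
set_option synthInstance.maxHeartbeats 200000 in
lemma firstAlg_span (K : Type*) [Field K] (ζ : K) :
    Submodule.span K (Set.range fun p : Fin 4 × Fin 2 =>
      (Ideal.Quotient.mk (firstRelIdeal K ζ) (X 0 : MvPolynomial (Fin 2) K)) ^ (p.1 : ℕ) *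
      (Ideal.Quotient.mk (firstRelIdeal K ζ) (X 1 : MvPolynomial (Fin 2) K)) ^ (p.2 : ℕ)) = ⊤ := by
  set I := firstRelIdeal K ζ with hI
  set x : FirstAlg K ζ := Ideal.Quotient.mk I (X 0) with hxdef
  set y : FirstAlg K ζ := Ideal.Quotient.mk I (X 1) with hydef
  set S := Submodule.span K (Set.range fun p : Fin 4 × Fin 2 => x ^ (p.1 : ℕ) * y ^ (p.2 : ℕ)) with hS
  have hCmk : ∀ c : K, Ideal.Quotient.mk I (C c) = algebraMap K (FirstAlg K ζ) c := by
    intro c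
    have h := (Ideal.Quotient.mkₐ K I).commutes c
    rwa [MvPolynomial.algebraMap_eq, Ideal.Quotient.mkₐ_eq_mk] at h
  have hx4 : x ^ 4 = 1 := by
    have h : (X 0 ^ 4 - 1 : MvPolynomial (Fin 2) K) ∈ I := Ideal.subset_span (Set.mem_insert _ _)
    have h2 := Ideal.Quotient.eq_zero_iff_mem.mpr h
    rw [map_sub, map_pow, map_one, sub_eq_zero] at h2
    exact h2
  have hy2 : y ^ 2 = algebraMap K (FirstAlg K ζ) ((2:K)⁻¹) *
      (1 + algebraMap K _ ζ * x + x ^ 2 - algebraMap K _ ζ * x ^ 3) := by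
    have h : (X 1 ^ 2 - C ((2 : K)⁻¹) * (1 + C ζ * X 0 + X 0 ^ 2 - C ζ * X 0 ^ 3)) ∈ I :=
      Ideal.subset_span (Set.mem_insert_of_mem _ rfl)
    have h2 := Ideal.Quotient.eq_zero_iff_mem.mpr h
    rw [map_sub, sub_eq_zero] at h2
    simpa [map_add, map_sub, map_mul, map_pow, map_one, hCmk] using h2
  have gen : ∀ (i : Fin 4) (j : Fin 2), x ^ (i : ℕ) * y ^ (j : ℕ) ∈ S :=
    fun i j => Submodule.subset_span ⟨(i, j), rfl⟩
  have hmod : ∀ m : ℕ, x ^ m = x ^ (m % 4) := by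
    intro m
    conv_lhs => rw [← Nat.div_add_mod m 4]
    rw [pow_add, pow_mul, hx4, one_pow, one_mul]
  have key : ∀ n m : ℕ, x ^ m * y ^ n ∈ S := by
    intro n
    induction n using Nat.twoStepInduction with
    | zero => intro m; rw [hmod]; exact gen ⟨m % 4, Nat.mod_lt _ (by norm_num)⟩ 0
    | one => intro m; rw [hmod]; exact gen ⟨m % 4, Nat.mod_lt _ (by norm_num)⟩ 1
    | more n ihn _ =>
      intro m
      have expand : x ^ m * y ^ (n + 2) =
          (2:K)⁻¹ • (x ^ m * y ^ n) + ((2:K)⁻¹ * ζ) • (x ^ (m+1) * y ^ n)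
          + (2:K)⁻¹ • (x ^ (m+2) * y ^ n) - ((2:K)⁻¹ * ζ) • (x ^ (m+3) * y ^ n) := by
        have h1 : x ^ m * y ^ (n + 2) = (x ^ m * y ^ n) * y ^ 2 := by ring
        have hsm : ∀ (c : K) (v : FirstAlg K ζ), c • v = algebraMap K (FirstAlg K ζ) c * v :=
          fun c v => Algebra.smul_def c v
        rw [h1, hy2]
        simp only [hsm, map_mul]
        ring
      rw [expand]
      exact sub_mem (add_mem (add_mem (Submodule.smul_mem _ _ (ihn m))
        (Submodule.smul_mem _ _ (ihn (m+1)))) (Submodule.smul_mem _ _ (ihn (m+2))))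
        (Submodule.smul_mem _ _ (ihn (m+3)))
  have hxS : ∀ v ∈ S, v * x ∈ S := by
    intro v hv
    induction hv using Submodule.span_induction with
    | mem w hw =>
      obtain ⟨⟨i, j⟩, rfl⟩ := hw
      have h : x ^ (i:ℕ) * y ^ (j:ℕ) * x = x ^ ((i:ℕ)+1) * y ^ (j:ℕ) := by ring
      rw [h]; exact key _ _
    | zero => simpa using S.zero_mem
    | add a b _ _ ha hb => rw [add_mul]; exact S.add_mem ha hb
    | smul a v _ hv => rw [smul_mul_assoc]; exact S.smul_mem _ hv
  have hyS : ∀ v ∈ S, v * y ∈ S := by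
    intro v hv
    induction hv using Submodule.span_induction with
    | mem w hw =>
      obtain ⟨⟨i, j⟩, rfl⟩ := hw
      have h : x ^ (i:ℕ) * y ^ (j:ℕ) * y = x ^ (i:ℕ) * y ^ ((j:ℕ)+1) := by ring
      rw [h]; exact key _ _
    | zero => simpa using S.zero_mem
    | add a b _ _ ha hb => rw [add_mul]; exact S.add_mem ha hb
    | smul a v _ hv => rw [smul_mul_assoc]; exact S.smul_mem _ hv
  have main : ∀ p : MvPolynomial (Fin 2) K, Ideal.Quotient.mk I p ∈ S := by
    intro p
    induction p using MvPolynomial.induction_on with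
    | C a =>
      have h1 : Ideal.Quotient.mk I (C a) = a • (1 : FirstAlg K ζ) := by
        rw [hCmk, Algebra.algebraMap_eq_smul_one]
      rw [h1]
      exact S.smul_mem _ (by simpa using key 0 0)
    | add p q hp hq => rw [map_add]; exact S.add_mem hp hq
    | mul_X p i hp =>
      rw [map_mul]
      fin_cases i
      · exact hxS _ hp
      · exact hyS _ hp
  rw [Submodule.eq_top_iff']
  intro v
  obtain ⟨p, rfl⟩ := Ideal.Quotient.mk_surjective v
  exact main p

set_option maxHeartbeats 1000000 in
set_option synthInstance.maxHeartbeats 400000 in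
theorem stmt_3 {K : Type*} [Field K] (ξ : K) (hξ : IsPrimitiveRoot ξ 8)
    (ζ : K) (hζ : ζ ^ 4 = 1) :
    Nonempty (FirstAlg K ζ ≃ₐ[K] (Fin 8 → K)) ∧
      Module.finrank K (FirstAlg K ζ) = 8 := by
  have hξ8 : ξ ^ 8 = 1 := hξ.pow_eq_one
  have hξ41 : ξ ^ 4 ≠ 1 := by
    intro h
    have := hξ.dvd_of_pow_eq_one 4 h
    omega
  have hξ4 : ξ ^ 4 = -1 := by
    have h : (ξ ^ 4 - 1) * (ξ ^ 4 + 1) = 0 := by linear_combination hξ8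
    rcases mul_eq_zero.mp h with h | h
    · exact absurd (by linear_combination h) hξ41
    · linear_combination h
  have h2 : (2 : K) ≠ 0 := by
    intro h
    exact hξ41 (by rw [hξ4]; linear_combination -h)
  have hξ0 : ξ ≠ 0 := by
    intro h
    rw [h] at hξ8; norm_num at hξ8
  have hζ0 : ζ ≠ 0 := by
    intro h
    rw [h] at hζ; norm_num at hζ
  have hu : ∃ u : K, u ^ 2 = ζ := by
    have h1 : (ζ ^ 2 - 1) * (ζ ^ 2 + 1) = 0 := by linear_combination hζ
    rcases mul_eq_zero.mp h1 with h | h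
    · have h1' : (ζ - 1) * (ζ + 1) = 0 := by linear_combination h
      rcases mul_eq_zero.mp h1' with h' | h'
      · exact ⟨1, by linear_combination -h'⟩
      · exact ⟨ξ ^ 2, by linear_combination hξ4 - h'⟩
    · have h1' : (ζ - ξ ^ 2) * (ζ + ξ ^ 2) = 0 := by linear_combination h - hξ4
      rcases mul_eq_zero.mp h1' with h' | h'
      · exact ⟨ξ, by linear_combination -h'⟩
      · exact ⟨ξ ^ 3, by linear_combination ξ ^ 2 * hξ4 - h'⟩
  obtain ⟨u, huζ⟩ := hu
  have hu0 : u ≠ 0 := by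
    intro h; rw [h] at huζ; exact hζ0 (by linear_combination -huζ)
  have hgen1 : firstΦ ξ u (X 0 ^ 4 - 1) = 0 := by
    funext i
    fin_cases i <;> norm_num [firstΦ, firstPts] <;>
      first
        | linear_combination hξ8
        | linear_combination -hξ8
  have hgen2 : firstΦ ξ u (X 1 ^ 2 - C ((2 : K)⁻¹) * (1 + C ζ * X 0 + X 0 ^ 2 - C ζ * X 0 ^ 3)) = 0 := by
    funext i
    fin_cases i <;> norm_num [firstΦ, firstPts] <;> (try field_simp) <;>
      first
        | linear_combination
        | linear_combination 2 * ξ ^ 2 * huζ + (ζ * ξ ^ 2 - 1) * hξ4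
        | linear_combination -(2 * ξ ^ 2 * huζ + (ζ * ξ ^ 2 - 1) * hξ4)
        | linear_combination 2 * ξ ^ 6 * huζ + (ζ * ξ ^ 2 - 1) * hξ4
        | linear_combination -(2 * ξ ^ 6 * huζ + (ζ * ξ ^ 2 - 1) * hξ4)
  set m : Fin 8 → Ideal (MvPolynomial (Fin 2) K) :=
    fun i => RingHom.ker (MvPolynomial.aeval (firstPts ξ u i) : MvPolynomial (Fin 2) K →ₐ[K] K)
    with hmdef
  have cop : ∀ i j : Fin 8, ∀ k, firstPts ξ u i k ≠ firstPts ξ u j k →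
      IsCoprime (m i) (m j) := by
    intro i j k hk
    rw [Ideal.isCoprime_iff_exists]
    set d : K := firstPts ξ u j k - firstPts ξ u i k with hddef
    have hd : d ≠ 0 := sub_ne_zero.mpr (Ne.symm hk)
    refine ⟨C d⁻¹ * (X k - C (firstPts ξ u i k)), ?_, -(C d⁻¹) * (X k - C (firstPts ξ u j k)),
      ?_, ?_⟩
    · simp [hmdef, RingHom.mem_ker]
    · simp [hmdef, RingHom.mem_ker]
    · have h1 : (1 : MvPolynomial (Fin 2) K) = C (d⁻¹ * d) := by
        rw [inv_mul_cancel₀ hd, C_1]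
      rw [h1, hddef, C_mul, C_sub]
      ring
  have hι1 : ξ ^ 2 ≠ 1 := fun h => absurd (hξ.dvd_of_pow_eq_one 2 h) (by omega)
  have hιm1 : ξ ^ 2 ≠ -1 := fun h => hξ41 (by linear_combination (ξ ^ 2 - 1) * h)
  have hs0 : ξ * u ≠ 0 := mul_ne_zero hξ0 hu0
  have ht0 : ξ ^ 3 * u ≠ 0 := mul_ne_zero (pow_ne_zero 3 hξ0) hu0
  have n1 : (1 : K) ≠ -1 := fun h => h2 (by linear_combination h)
  have n2 : (1 : K) ≠ ξ ^ 2 := Ne.symm hι1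
  have n3 : (1 : K) ≠ -ξ ^ 2 := fun h => hιm1 (by linear_combination h)
  have n4 : (-1 : K) ≠ ξ ^ 2 := fun h => hιm1 (by linear_combination -h)
  have n5 : (-1 : K) ≠ -ξ ^ 2 := fun h => hι1 (by linear_combination h)
  have n6 : ξ ^ 2 ≠ -ξ ^ 2 := by
    intro h
    have h' : (2 : K) * ξ ^ 2 = 0 := by linear_combination h
    rcases mul_eq_zero.mp h' with h'' | h''
    · exact h2 h''
    · exact hξ0 ((pow_eq_zero_iff (by norm_num)).mp h'')
  have n7 : ξ * u ≠ -(ξ * u) := by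
    intro h
    have h' : (2 : K) * (ξ * u) = 0 := by linear_combination h
    rcases mul_eq_zero.mp h' with h'' | h''
    · exact h2 h''
    · exact hs0 h''
  have n8 : ξ ^ 3 * u ≠ -(ξ ^ 3 * u) := by
    intro h
    have h' : (2 : K) * (ξ ^ 3 * u) = 0 := by linear_combination h
    rcases mul_eq_zero.mp h' with h'' | h''
    · exact h2 h''
    · exact ht0 h''
  have e00 : firstPts ξ u 0 0 = 1 := by norm_num [firstPts]
  have e01 : firstPts ξ u 0 1 = 1 := by norm_num [firstPts]
  have e10 : firstPts ξ u 1 0 = 1 := by norm_num [firstPts]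
  have e11 : firstPts ξ u 1 1 = -1 := by norm_num [firstPts]
  have e20 : firstPts ξ u 2 0 = -1 := by rfl
  have e21 : firstPts ξ u 2 1 = 1 := by rfl
  have e30 : firstPts ξ u 3 0 = -1 := by rfl
  have e31 : firstPts ξ u 3 1 = -1 := by rfl
  have e40 : firstPts ξ u 4 0 = ξ ^ 2 := by rfl
  have e41 : firstPts ξ u 4 1 = ξ * u := by rfl
  have e50 : firstPts ξ u ⟨5, by omega⟩ 0 = ξ ^ 2 := by norm_num [firstPts]
  have e51 : firstPts ξ u ⟨5, by omega⟩ 1 = -(ξ * u) := by norm_num [firstPts]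
  have e60 : firstPts ξ u ⟨6, by omega⟩ 0 = -ξ ^ 2 := by norm_num [firstPts]
  have e61 : firstPts ξ u ⟨6, by omega⟩ 1 = ξ ^ 3 * u := by norm_num [firstPts]
  have e70 : firstPts ξ u ⟨7, by omega⟩ 0 = -ξ ^ 2 := by norm_num [firstPts]
  have e71 : firstPts ξ u ⟨7, by omega⟩ 1 = -(ξ ^ 3 * u) := by norm_num [firstPts]
  have hpair : Pairwise (Function.onFun IsCoprime m) := by
    intro i j hij
    simp only [Function.onFun]
    fin_cases i <;> fin_cases j
    · exact absurd rfl hij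
    · exact cop _ _ 1 (show firstPts ξ u 0 1 ≠ firstPts ξ u 1 1 by rw [e01, e11]; exact n1)
    · exact cop _ _ 0 (show firstPts ξ u 0 0 ≠ firstPts ξ u 2 0 by rw [e00, e20]; exact n1)
    · exact cop _ _ 0 (show firstPts ξ u 0 0 ≠ firstPts ξ u 3 0 by rw [e00, e30]; exact n1)
    · exact cop _ _ 0 (show firstPts ξ u 0 0 ≠ firstPts ξ u 4 0 by rw [e00, e40]; exact n2)
    · exact cop _ _ 0 (show firstPts ξ u 0 0 ≠ firstPts ξ u ⟨5, by omega⟩ 0 by rw [e00, e50]; exact n2)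
    · exact cop _ _ 0 (show firstPts ξ u 0 0 ≠ firstPts ξ u ⟨6, by omega⟩ 0 by rw [e00, e60]; exact n3)
    · exact cop _ _ 0 (show firstPts ξ u 0 0 ≠ firstPts ξ u ⟨7, by omega⟩ 0 by rw [e00, e70]; exact n3)
    · exact cop _ _ 1 (show firstPts ξ u 1 1 ≠ firstPts ξ u 0 1 by rw [e11, e01]; exact n1.symm)
    · exact absurd rfl hij
    · exact cop _ _ 0 (show firstPts ξ u 1 0 ≠ firstPts ξ u 2 0 by rw [e10, e20]; exact n1)
    · exact cop _ _ 0 (show firstPts ξ u 1 0 ≠ firstPts ξ u 3 0 by rw [e10, e30]; exact n1)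
    · exact cop _ _ 0 (show firstPts ξ u 1 0 ≠ firstPts ξ u 4 0 by rw [e10, e40]; exact n2)
    · exact cop _ _ 0 (show firstPts ξ u 1 0 ≠ firstPts ξ u ⟨5, by omega⟩ 0 by rw [e10, e50]; exact n2)
    · exact cop _ _ 0 (show firstPts ξ u 1 0 ≠ firstPts ξ u ⟨6, by omega⟩ 0 by rw [e10, e60]; exact n3)
    · exact cop _ _ 0 (show firstPts ξ u 1 0 ≠ firstPts ξ u ⟨7, by omega⟩ 0 by rw [e10, e70]; exact n3)
    · exact cop _ _ 0 (show firstPts ξ u 2 0 ≠ firstPts ξ u 0 0 by rw [e20, e00]; exact n1.symm)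
    · exact cop _ _ 0 (show firstPts ξ u 2 0 ≠ firstPts ξ u 1 0 by rw [e20, e10]; exact n1.symm)
    · exact absurd rfl hij
    · exact cop _ _ 1 (show firstPts ξ u 2 1 ≠ firstPts ξ u 3 1 by rw [e21, e31]; exact n1)
    · exact cop _ _ 0 (show firstPts ξ u 2 0 ≠ firstPts ξ u 4 0 by rw [e20, e40]; exact n4)
    · exact cop _ _ 0 (show firstPts ξ u 2 0 ≠ firstPts ξ u ⟨5, by omega⟩ 0 by rw [e20, e50]; exact n4)
    · exact cop _ _ 0 (show firstPts ξ u 2 0 ≠ firstPts ξ u ⟨6, by omega⟩ 0 by rw [e20, e60]; exact n5)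
    · exact cop _ _ 0 (show firstPts ξ u 2 0 ≠ firstPts ξ u ⟨7, by omega⟩ 0 by rw [e20, e70]; exact n5)
    · exact cop _ _ 0 (show firstPts ξ u 3 0 ≠ firstPts ξ u 0 0 by rw [e30, e00]; exact n1.symm)
    · exact cop _ _ 0 (show firstPts ξ u 3 0 ≠ firstPts ξ u 1 0 by rw [e30, e10]; exact n1.symm)
    · exact cop _ _ 1 (show firstPts ξ u 3 1 ≠ firstPts ξ u 2 1 by rw [e31, e21]; exact n1.symm)
    · exact absurd rfl hij
    · exact cop _ _ 0 (show firstPts ξ u 3 0 ≠ firstPts ξ u 4 0 by rw [e30, e40]; exact n4)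
    · exact cop _ _ 0 (show firstPts ξ u 3 0 ≠ firstPts ξ u ⟨5, by omega⟩ 0 by rw [e30, e50]; exact n4)
    · exact cop _ _ 0 (show firstPts ξ u 3 0 ≠ firstPts ξ u ⟨6, by omega⟩ 0 by rw [e30, e60]; exact n5)
    · exact cop _ _ 0 (show firstPts ξ u 3 0 ≠ firstPts ξ u ⟨7, by omega⟩ 0 by rw [e30, e70]; exact n5)
    · exact cop _ _ 0 (show firstPts ξ u 4 0 ≠ firstPts ξ u 0 0 by rw [e40, e00]; exact n2.symm)
    · exact cop _ _ 0 (show firstPts ξ u 4 0 ≠ firstPts ξ u 1 0 by rw [e40, e10]; exact n2.symm)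
    · exact cop _ _ 0 (show firstPts ξ u 4 0 ≠ firstPts ξ u 2 0 by rw [e40, e20]; exact n4.symm)
    · exact cop _ _ 0 (show firstPts ξ u 4 0 ≠ firstPts ξ u 3 0 by rw [e40, e30]; exact n4.symm)
    · exact absurd rfl hij
    · exact cop _ _ 1 (show firstPts ξ u 4 1 ≠ firstPts ξ u ⟨5, by omega⟩ 1 by rw [e41, e51]; exact n7)
    · exact cop _ _ 0 (show firstPts ξ u 4 0 ≠ firstPts ξ u ⟨6, by omega⟩ 0 by rw [e40, e60]; exact n6)
    · exact cop _ _ 0 (show firstPts ξ u 4 0 ≠ firstPts ξ u ⟨7, by omega⟩ 0 by rw [e40, e70]; exact n6)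
    · exact cop _ _ 0 (show firstPts ξ u ⟨5, by omega⟩ 0 ≠ firstPts ξ u 0 0 by rw [e50, e00]; exact n2.symm)
    · exact cop _ _ 0 (show firstPts ξ u ⟨5, by omega⟩ 0 ≠ firstPts ξ u 1 0 by rw [e50, e10]; exact n2.symm)
    · exact cop _ _ 0 (show firstPts ξ u ⟨5, by omega⟩ 0 ≠ firstPts ξ u 2 0 by rw [e50, e20]; exact n4.symm)
    · exact cop _ _ 0 (show firstPts ξ u ⟨5, by omega⟩ 0 ≠ firstPts ξ u 3 0 by rw [e50, e30]; exact n4.symm)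
    · exact cop _ _ 1 (show firstPts ξ u ⟨5, by omega⟩ 1 ≠ firstPts ξ u 4 1 by rw [e51, e41]; exact n7.symm)
    · exact absurd rfl hij
    · exact cop _ _ 0 (show firstPts ξ u ⟨5, by omega⟩ 0 ≠ firstPts ξ u ⟨6, by omega⟩ 0 by rw [e50, e60]; exact n6)
    · exact cop _ _ 0 (show firstPts ξ u ⟨5, by omega⟩ 0 ≠ firstPts ξ u ⟨7, by omega⟩ 0 by rw [e50, e70]; exact n6)
    · exact cop _ _ 0 (show firstPts ξ u ⟨6, by omega⟩ 0 ≠ firstPts ξ u 0 0 by rw [e60, e00]; exact n3.symm)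
    · exact cop _ _ 0 (show firstPts ξ u ⟨6, by omega⟩ 0 ≠ firstPts ξ u 1 0 by rw [e60, e10]; exact n3.symm)
    · exact cop _ _ 0 (show firstPts ξ u ⟨6, by omega⟩ 0 ≠ firstPts ξ u 2 0 by rw [e60, e20]; exact n5.symm)
    · exact cop _ _ 0 (show firstPts ξ u ⟨6, by omega⟩ 0 ≠ firstPts ξ u 3 0 by rw [e60, e30]; exact n5.symm)
    · exact cop _ _ 0 (show firstPts ξ u ⟨6, by omega⟩ 0 ≠ firstPts ξ u 4 0 by rw [e60, e40]; exact n6.symm)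
    · exact cop _ _ 0 (show firstPts ξ u ⟨6, by omega⟩ 0 ≠ firstPts ξ u ⟨5, by omega⟩ 0 by rw [e60, e50]; exact n6.symm)
    · exact absurd rfl hij
    · exact cop _ _ 1 (show firstPts ξ u ⟨6, by omega⟩ 1 ≠ firstPts ξ u ⟨7, by omega⟩ 1 by rw [e61, e71]; exact n8)
    · exact cop _ _ 0 (show firstPts ξ u ⟨7, by omega⟩ 0 ≠ firstPts ξ u 0 0 by rw [e70, e00]; exact n3.symm)
    · exact cop _ _ 0 (show firstPts ξ u ⟨7, by omega⟩ 0 ≠ firstPts ξ u 1 0 by rw [e70, e10]; exact n3.symm)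
    · exact cop _ _ 0 (show firstPts ξ u ⟨7, by omega⟩ 0 ≠ firstPts ξ u 2 0 by rw [e70, e20]; exact n5.symm)
    · exact cop _ _ 0 (show firstPts ξ u ⟨7, by omega⟩ 0 ≠ firstPts ξ u 3 0 by rw [e70, e30]; exact n5.symm)
    · exact cop _ _ 0 (show firstPts ξ u ⟨7, by omega⟩ 0 ≠ firstPts ξ u 4 0 by rw [e70, e40]; exact n6.symm)
    · exact cop _ _ 0 (show firstPts ξ u ⟨7, by omega⟩ 0 ≠ firstPts ξ u ⟨5, by omega⟩ 0 by rw [e70, e50]; exact n6.symm)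
    · exact cop _ _ 1 (show firstPts ξ u ⟨7, by omega⟩ 1 ≠ firstPts ξ u ⟨6, by omega⟩ 1 by rw [e71, e61]; exact n8.symm)
    · exact absurd rfl hij
  have hΦsurj : Function.Surjective (firstΦ ξ u) := by
    intro v
    obtain ⟨q, hq⟩ := Ideal.quotientInfToPiQuotient_surj hpair
      (fun i => Ideal.Quotient.mk (m i) (C (v i)))
    obtain ⟨p, rfl⟩ := Ideal.Quotient.mk_surjective q
    refine ⟨p, ?_⟩
    funext i
    have h1 : Ideal.Quotient.mk (m i) p = Ideal.Quotient.mk (m i) (C (v i)) := by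
      have hq' := congrFun hq i
      rwa [Ideal.quotientInfToPiQuotient_mk'] at hq'
    have h3 : MvPolynomial.aeval (firstPts ξ u i) (p - C (v i)) = (0 : K) := by
      have h2' : p - C (v i) ∈ m i := Ideal.Quotient.eq.mp h1
      simpa [hmdef, RingHom.mem_ker] using h2'
    rw [map_sub, aeval_C, Algebra.algebraMap_self_apply, sub_eq_zero] at h3
    simpa [firstΦ] using h3
  have hker : ∀ p ∈ firstRelIdeal K ζ, (firstΦ ξ u) p = 0 := by
    have hle : firstRelIdeal K ζ ≤ RingHom.ker (firstΦ ξ u) := by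
      rw [firstRelIdeal, Ideal.span_le]
      intro g hg
      simp only [Set.mem_insert_iff, Set.mem_singleton_iff] at hg
      rcases hg with rfl | rfl
      · exact SetLike.mem_coe.mpr (RingHom.mem_ker.mpr hgen1)
      · exact SetLike.mem_coe.mpr (RingHom.mem_ker.mpr hgen2)
    exact fun p hp => RingHom.mem_ker.mp (hle hp)
  classical
  have hspan := firstAlg_span K ζ
  haveI hfinA : Module.Finite K (FirstAlg K ζ) := by
    rw [Module.finite_def]
    exact ⟨(Set.finite_range _).toFinset, by rw [Set.Finite.coe_toFinset]; exact hspan⟩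
  set ψ : FirstAlg K ζ →ₐ[K] (Fin 8 → K) :=
    Ideal.Quotient.liftₐ _ (firstΦ ξ u) hker with hψdef
  have hψmk : ∀ p, ψ (Ideal.Quotient.mk (firstRelIdeal K ζ) p) = firstΦ ξ u p := by
    intro p
    simp [hψdef, Ideal.Quotient.liftₐ_apply, Ideal.Quotient.lift_mk]
    rfl
  have hψsurj : Function.Surjective ψ := by
    intro v
    obtain ⟨p, hp⟩ := hΦsurj v
    exact ⟨Ideal.Quotient.mk _ p, by rw [hψmk, hp]⟩
  have h8 : Module.finrank K (Fin 8 → K) = 8 := by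
    simp [Module.finrank_pi]
  have hle8 : Module.finrank K (FirstAlg K ζ) ≤ 8 := by
    have h1 := finrank_span_le_card (R := K) (Set.range fun p : Fin 4 × Fin 2 =>
      (Ideal.Quotient.mk (firstRelIdeal K ζ) (X 0 : MvPolynomial (Fin 2) K)) ^ (p.1 : ℕ) *
      (Ideal.Quotient.mk (firstRelIdeal K ζ) (X 1 : MvPolynomial (Fin 2) K)) ^ (p.2 : ℕ))
    rw [hspan, finrank_top] at h1
    refine h1.trans ?_
    rw [Set.toFinset_range]
    exact (Finset.card_image_le).trans (by simp)
  have hge8 : 8 ≤ Module.finrank K (FirstAlg K ζ) := by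
    have h1 := LinearMap.finrank_range_le ψ.toLinearMap
    have hr : LinearMap.range ψ.toLinearMap = ⊤ := LinearMap.range_eq_top.mpr hψsurj
    rwa [hr, finrank_top, h8] at h1
  have heq : Module.finrank K (FirstAlg K ζ) = 8 := le_antisymm hle8 hge8
  have hinj : Function.Injective ψ :=
    (LinearMap.injective_iff_surjective_of_finrank_eq_finrank
      (f := ψ.toLinearMap) (by rw [heq, h8])).mpr hψsurj
  exact ⟨⟨AlgEquiv.ofBijective ψ ⟨hinj, hψsurj⟩⟩, heq⟩
end

section
/- There exist (unique) K-algebra endomorphisms φ and φ' of A determined on the generators by φ(x) = x³, φ(y) = x³y and φ'(x) = x, φ'(y) = x²y. Moreover φ² = id_A, φ'² = id_A, and φ ∘ φ' = φ' ∘ φ; in particular φ and φ' are algebra automorphisms of order two that commute. -/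
open MvPolynomial

/-- The generator `x` of the first example. -/
noncomputable def xF (K : Type*) [Field K] (ζ : K) : FirstAlg K ζ :=
  Ideal.Quotient.mk (firstRelIdeal K ζ) (X 0)

/-- The generator `y` of the first example. -/
noncomputable def yF (K : Type*) [Field K] (ζ : K) : FirstAlg K ζ :=
  Ideal.Quotient.mk (firstRelIdeal K ζ) (X 1)

section Aux
variable {K : Type*} [Field K] (ζ : K)

lemma hxF : xF K ζ ^ 4 = 1 := by
  have h : (Ideal.Quotient.mk (firstRelIdeal K ζ)) (X 0 ^ 4 - 1) = 0 :=
    Ideal.Quotient.eq_zero_iff_mem.mpr (Ideal.subset_span (by simp))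
  rw [map_sub, map_pow, map_one, sub_eq_zero] at h
  exact h

lemma hyF : yF K ζ ^ 2 = algebraMap K (FirstAlg K ζ) ((2:K)⁻¹) *
    (1 + algebraMap K (FirstAlg K ζ) ζ * xF K ζ + xF K ζ ^ 2
      - algebraMap K (FirstAlg K ζ) ζ * xF K ζ ^ 3) := by
  have h : (Ideal.Quotient.mkₐ K (firstRelIdeal K ζ))
      (X 1 ^ 2 - C ((2:K)⁻¹) * (1 + C ζ * X 0 + X 0 ^ 2 - C ζ * X 0 ^ 3)) = 0 := by
    rw [Ideal.Quotient.mkₐ_eq_mk, Ideal.Quotient.eq_zero_iff_mem]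
    exact Ideal.subset_span (by simp)
  rw [← MvPolynomial.algebraMap_eq] at h
  simp only [map_sub, map_add, map_mul, map_pow, map_one, AlgHom.commutes, sub_eq_zero] at h
  exact h

lemma FirstAlg.hom_ext {f g : FirstAlg K ζ →ₐ[K] FirstAlg K ζ}
    (h1 : f (xF K ζ) = g (xF K ζ)) (h2 : f (yF K ζ) = g (yF K ζ)) : f = g := by
  apply Ideal.Quotient.algHom_ext
  apply MvPolynomial.algHom_ext
  intro i
  fin_cases i
  · exact h1
  · exact h2

set_option maxHeartbeats 1000000 in
/-- Existence of an algebra endomorphism with prescribed values on the generators,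
provided the relations are preserved. -/
lemma FirstAlg.exists_hom (u v : FirstAlg K ζ)
    (hu : u ^ 4 = 1)
    (hv : v ^ 2 = algebraMap K (FirstAlg K ζ) ((2:K)⁻¹) *
      (1 + algebraMap K (FirstAlg K ζ) ζ * u + u ^ 2
        - algebraMap K (FirstAlg K ζ) ζ * u ^ 3)) :
    ∃ φ : FirstAlg K ζ →ₐ[K] FirstAlg K ζ, φ (xF K ζ) = u ∧ φ (yF K ζ) = v := by
  have hle : firstRelIdeal K ζ ≤
      RingHom.ker (aeval ![u, v] : MvPolynomial (Fin 2) K →ₐ[K] FirstAlg K ζ) := by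
    refine Ideal.span_le.mpr ?_
    rintro q hq
    simp only [Set.mem_insert_iff, Set.mem_singleton_iff] at hq
    rcases hq with rfl | rfl <;>
      simp only [SetLike.mem_coe, RingHom.mem_ker, AlgHom.toRingHom_eq_coe,
        RingHom.coe_coe, map_sub, map_add, map_mul, map_pow, map_one, aeval_X,
        algebraMap_eq, aeval_C, Matrix.cons_val_zero, Matrix.cons_val_one, Matrix.head_cons]
    · rw [hu]; exact sub_self 1
    · rw [hv]; exact sub_self _
  refine ⟨Ideal.Quotient.liftₐ _ (aeval ![u, v]) (fun p hp => hle hp), ?_, ?_⟩ <;>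
    simp [xF, yF, Ideal.Quotient.liftₐ_apply, Ideal.Quotient.lift_mk] <;>
    exact aeval_X ![u, v] _

end Aux

theorem stmt_4 {K : Type*} [Field K] (ξ : K) (hξ : IsPrimitiveRoot ξ 8)
    (ζ : K) (hζ : ζ ^ 4 = 1) :
    (∃! φ : FirstAlg K ζ →ₐ[K] FirstAlg K ζ,
      φ (xF K ζ) = xF K ζ ^ 3 ∧ φ (yF K ζ) = xF K ζ ^ 3 * yF K ζ) ∧
    (∃! φ' : FirstAlg K ζ →ₐ[K] FirstAlg K ζ,
      φ' (xF K ζ) = xF K ζ ∧ φ' (yF K ζ) = xF K ζ ^ 2 * yF K ζ) ∧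
    (∀ φ φ' : FirstAlg K ζ →ₐ[K] FirstAlg K ζ,
      (φ (xF K ζ) = xF K ζ ^ 3 ∧ φ (yF K ζ) = xF K ζ ^ 3 * yF K ζ) →
      (φ' (xF K ζ) = xF K ζ ∧ φ' (yF K ζ) = xF K ζ ^ 2 * yF K ζ) →
      φ.comp φ = AlgHom.id K (FirstAlg K ζ) ∧
      φ'.comp φ' = AlgHom.id K (FirstAlg K ζ) ∧
      Function.Bijective φ ∧ Function.Bijective φ' ∧
      φ.comp φ' = φ'.comp φ) := by
  have hx : xF K ζ ^ 4 = 1 := hxF ζ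
  have hy := hyF ζ
  set a := xF K ζ with ha
  set b := yF K ζ with hb
  set cz := algebraMap K (FirstAlg K ζ) ζ with hcz
  set c2 := algebraMap K (FirstAlg K ζ) ((2:K)⁻¹) with hc2
  -- existence of φ
  obtain ⟨φ₀, hφ₀x, hφ₀y⟩ := FirstAlg.exists_hom ζ (a ^ 3) (a ^ 3 * b)
    (by linear_combination (a^8 + a^4 + 1 : FirstAlg K ζ) * hx)
    (by linear_combination a^6 * hy + c2 * (cz * a^3 + a^4 + 1) * hx)
  -- existence of φ'
  obtain ⟨φ₁, hφ₁x, hφ₁y⟩ := FirstAlg.exists_hom ζ a (a ^ 2 * b)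
    hx (by linear_combination a^4 * hy + c2 * (1 + cz * a + a^2 - cz * a^3) * hx)
  refine ⟨⟨φ₀, ⟨hφ₀x, hφ₀y⟩, fun ψ ⟨h1, h2⟩ => FirstAlg.hom_ext ζ
      (by rw [h1, hφ₀x]) (by rw [h2, hφ₀y])⟩,
    ⟨φ₁, ⟨hφ₁x, hφ₁y⟩, fun ψ ⟨h1, h2⟩ => FirstAlg.hom_ext ζ
      (by rw [h1, hφ₁x]) (by rw [h2, hφ₁y])⟩, ?_⟩
  rintro φ φ' ⟨hpx, hpy⟩ ⟨hqx, hqy⟩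
  have hφφ : φ.comp φ = AlgHom.id K (FirstAlg K ζ) := by
    apply FirstAlg.hom_ext ζ <;>
      simp only [AlgHom.coe_comp, Function.comp_apply, AlgHom.coe_id, id_eq,
        ← ha, ← hb, hpx, hpy, map_mul, map_pow]
    · linear_combination (a^4 + 1) * a * hx
    · linear_combination (a^8 + a^4 + 1) * b * hx
  have hφ'φ' : φ'.comp φ' = AlgHom.id K (FirstAlg K ζ) := by
    apply FirstAlg.hom_ext ζ <;>
      simp only [AlgHom.coe_comp, Function.comp_apply, AlgHom.coe_id, id_eq,
        ← ha, ← hb, hqx, hqy, map_mul, map_pow]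
    linear_combination b * hx
  have hbij : ∀ f : FirstAlg K ζ →ₐ[K] FirstAlg K ζ,
      f.comp f = AlgHom.id K (FirstAlg K ζ) → Function.Bijective f := by
    intro f hf
    have h : ∀ z, f (f z) = z := fun z => by
      have := AlgHom.congr_fun hf z; simpa using this
    exact Function.bijective_iff_has_inverse.mpr ⟨f, h, h⟩
  refine ⟨hφφ, hφ'φ', hbij φ hφφ, hbij φ' hφ'φ', ?_⟩
  apply FirstAlg.hom_ext ζ <;>
    simp only [AlgHom.coe_comp, Function.comp_apply, map_mul, map_pow, ← ha, ← hb, hpx, hpy, hqx, hqy]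
  linear_combination a^5 * b * hx
end

section
/- For the action of G = Z/2 × Z/2 on A: ω₁ and ω₄ are fixed points of the G-action; g₃.ωᵢ = ωᵢ for all i = 1,2,3,4; g₂.ω₂ = ω₃; and G acts simply transitively on the set {η₁, η₂, η₃, η₄}: setting η_{gᵢ} := ηᵢ, one has gᵢ.η_{g_j} = η_{gᵢg_j} for all i, j. -/
/-! Every `g = (a, b) ∈ G` acts on `x` by `x ↦ x ^ s(g)` with `s(g) = 1 + 2a` (`xExp`), and
`η_g = x ^ k(g) * y` with `k(g) = 3a + 2b mod 4` (`etaExp`). Since `x⁴ = 1`, `g` acts on the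
monomials `xᵐ y` affinely on the exponent, `m ↦ s(g) m + k(g) mod 4`, so the simple transitivity
on the `η_g` is the finite cocycle identity `s(g) k(h) + k(g) ≡ k(gh) mod 4`. The claims on
the `ωᵢ` only need `s(g)` odd, i.e. `g` fixes `x²` and `g₂` swaps `x` and `x³`. -/

open MvPolynomial TensorProduct

/-- The group `G = ℤ/2 × ℤ/2`, written multiplicatively. -/
abbrev GG : Type := Multiplicative (ZMod 2 × ZMod 2)

/-- `g₁ = (0,0)`. -/
def g1 : GG := Multiplicative.ofAdd (0, 0)
/-- `g₂ = (1,0)`. -/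
def g2 : GG := Multiplicative.ofAdd (1, 0)
/-- `g₃ = (0,1)`. -/
def g3 : GG := Multiplicative.ofAdd (0, 1)
/-- `g₄ = (1,1)`. -/
def g4 : GG := Multiplicative.ofAdd (1, 1)

/-- The twisted multiplication of `A ⊗̂ A`:
`(a ⊗ b)(a' ⊗ b') = (1/4) ∑_{g,g'} θ(g,g') (a (g.a')) ⊗ ((g'.b) b')`,
extended bilinearly. -/
noncomputable def twMul {K : Type*} [Field K] {B : Type*} [Ring B] [Algebra K B]
    {G : Type*} [Monoid G] [Fintype G]
    (ρ : G →* (B →ₐ[K] B)) (θ : G → G → K)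
    (z w : B ⊗[K] B) : B ⊗[K] B :=
  (4 : K)⁻¹ • ∑ g : G, ∑ g' : G, θ g g' •
    (TensorProduct.map (LinearMap.mul' K B) (LinearMap.mul' K B))
      ((TensorProduct.tensorTensorTensorComm K B B B B)
        ((TensorProduct.map
            (TensorProduct.map LinearMap.id (ρ g').toLinearMap)
            (TensorProduct.map (ρ g).toLinearMap LinearMap.id))
          (z ⊗ₜ[K] w)))

/-- `ω₁ := 1`. -/
noncomputable def w1F (K : Type*) [Field K] (ζ : K) : FirstAlg K ζ := 1

/-- `ω₂ := (1/2)(1 + ιζ²)x + (1/2)(1 - ιζ²)x³`, where `ι = ξ²`. -/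
noncomputable def w2F (K : Type*) [Field K] (ξ ζ : K) : FirstAlg K ζ :=
  ((2 : K)⁻¹ * (1 + ξ ^ 2 * ζ ^ 2)) • xF K ζ +
    ((2 : K)⁻¹ * (1 - ξ ^ 2 * ζ ^ 2)) • (xF K ζ ^ 3)

/-- `ω₃ := (1/2)(1 - ιζ²)x + (1/2)(1 + ιζ²)x³`, where `ι = ξ²`. -/
noncomputable def w3F (K : Type*) [Field K] (ξ ζ : K) : FirstAlg K ζ :=
  ((2 : K)⁻¹ * (1 - ξ ^ 2 * ζ ^ 2)) • xF K ζ +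
    ((2 : K)⁻¹ * (1 + ξ ^ 2 * ζ ^ 2)) • (xF K ζ ^ 3)

/-- `ω₄ := x²`. -/
noncomputable def w4F (K : Type*) [Field K] (ζ : K) : FirstAlg K ζ := xF K ζ ^ 2

/-- `η₁ := y`. -/
noncomputable def e1F (K : Type*) [Field K] (ζ : K) : FirstAlg K ζ := yF K ζ

/-- `η₂ := x³y`. -/
noncomputable def e2F (K : Type*) [Field K] (ζ : K) : FirstAlg K ζ := xF K ζ ^ 3 * yF K ζ

/-- `η₃ := x²y`. -/
noncomputable def e3F (K : Type*) [Field K] (ζ : K) : FirstAlg K ζ := xF K ζ ^ 2 * yF K ζ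

/-- `η₄ := xy`. -/
noncomputable def e4F (K : Type*) [Field K] (ζ : K) : FirstAlg K ζ := xF K ζ * yF K ζ

theorem xF_pow_four (K : Type*) [Field K] (ζ : K) : xF K ζ ^ 4 = 1 := by
  rw [xF, ← map_pow, ← map_one (Ideal.Quotient.mk (firstRelIdeal K ζ))]
  exact Ideal.Quotient.eq.mpr (Ideal.subset_span (Set.mem_insert _ _))

theorem AlgHom.map_pow_mul_of_pow_eq_one {R B : Type*} [CommSemiring R] [CommSemiring B]
    [Algebra R B] (σ : B →ₐ[R] B) {x y : B} {d a b m n : ℕ} (hx : x ^ d = 1)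
    (hσx : σ x = x ^ a) (hσy : σ y = x ^ b * y) (hn : (a * m + b) % d = n % d) :
    σ (x ^ m * y) = x ^ n * y := by
  rw [map_mul, map_pow, hσx, hσy, ← mul_assoc, ← pow_mul, ← pow_add, pow_eq_pow_mod _ hx,
    hn, ← pow_eq_pow_mod _ hx]

theorem eq_g1_or_g2_or_g3_or_g4 (g : GG) : g = g1 ∨ g = g2 ∨ g = g3 ∨ g = g4 := by
  revert g
  decide

theorem g2_mul_g3 : g2 * g3 = g4 := rfl

def xExp (g : GG) : ℕ := 1 + 2 * (Multiplicative.toAdd g).1.val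

def etaExp (g : GG) : ℕ :=
  (3 * (Multiplicative.toAdd g).1.val + 2 * (Multiplicative.toAdd g).2.val) % 4

theorem xExp_mul_etaExp_add_etaExp (g h : GG) :
    (xExp g * etaExp h + etaExp g) % 4 = etaExp (g * h) % 4 := by
  revert g h
  decide

theorem two_mul_xExp (g : GG) : (2 * xExp g) % 4 = 2 % 4 := by
  revert g
  decide

section KleinAction

variable {R B : Type*} [CommSemiring R] [CommSemiring B] [Algebra R B] {x y : B}
  {ρ : GG →* (B →ₐ[R] B)}

theorem map_x_and_map_y (hx : x ^ 4 = 1) (h2x : ρ g2 x = x ^ 3) (h2y : ρ g2 y = x ^ 3 * y)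
    (h3x : ρ g3 x = x) (h3y : ρ g3 y = x ^ 2 * y) (g : GG) :
    ρ g x = x ^ xExp g ∧ ρ g y = x ^ etaExp g * y := by
  rcases eq_g1_or_g2_or_g3_or_g4 g with rfl | rfl | rfl | rfl
  · rw [show g1 = 1 from rfl, map_one, AlgHom.one_apply, AlgHom.one_apply,
      show etaExp 1 = 0 from rfl, pow_zero, one_mul]
    exact ⟨(pow_one x).symm, rfl⟩
  · exact ⟨h2x, h2y⟩
  · exact ⟨h3x.trans (pow_one x).symm, h3y⟩
  · rw [← g2_mul_g3, map_mul, AlgHom.mul_apply, AlgHom.mul_apply, h3x, h3y]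
    exact ⟨h2x, (ρ g2).map_pow_mul_of_pow_eq_one hx h2x h2y rfl⟩

theorem map_pow_etaExp_mul (hx : x ^ 4 = 1)
    (hρ : ∀ g, ρ g x = x ^ xExp g ∧ ρ g y = x ^ etaExp g * y) (g h : GG) :
    ρ g (x ^ etaExp h * y) = x ^ etaExp (g * h) * y :=
  (ρ g).map_pow_mul_of_pow_eq_one hx (hρ g).1 (hρ g).2 (xExp_mul_etaExp_add_etaExp g h)

theorem map_sq_eq (hx : x ^ 4 = 1) (hρ : ∀ g, ρ g x = x ^ xExp g) (g : GG) :
    ρ g (x ^ 2) = x ^ 2 := by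
  rw [map_pow, hρ, ← pow_mul, mul_comm, pow_eq_pow_mod _ hx, two_mul_xExp,
    ← pow_eq_pow_mod _ hx]

end KleinAction

theorem eq_xF_pow_etaExp_mul_yF {K : Type*} [Field K] {ζ : K} {η : GG → FirstAlg K ζ}
    (hη : η g1 = e1F K ζ ∧ η g2 = e2F K ζ ∧ η g3 = e3F K ζ ∧ η g4 = e4F K ζ) (g : GG) :
    η g = xF K ζ ^ etaExp g * yF K ζ := by
  obtain ⟨h1, h2, h3, h4⟩ := hη
  rcases eq_g1_or_g2_or_g3_or_g4 g with rfl | rfl | rfl | rfl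
  · rw [h1, e1F, show etaExp g1 = 0 from rfl, pow_zero, one_mul]
  · exact h2
  · exact h3
  · rw [h4, e4F, show etaExp g4 = 1 from rfl, pow_one]

theorem stmt_9_general {K : Type*} [Field K] (ξ : K)
    (ζ : K)
    (ρ : GG →* (FirstAlg K ζ →ₐ[K] FirstAlg K ζ))
    (hρ2x : ρ g2 (xF K ζ) = xF K ζ ^ 3) (hρ2y : ρ g2 (yF K ζ) = xF K ζ ^ 3 * yF K ζ)
    (hρ3x : ρ g3 (xF K ζ) = xF K ζ) (hρ3y : ρ g3 (yF K ζ) = xF K ζ ^ 2 * yF K ζ) :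
    -- `ω₁` and `ω₄` are fixed points of the `G`-action
    (∀ g : GG, ρ g (w1F K ζ) = w1F K ζ ∧ ρ g (w4F K ζ) = w4F K ζ) ∧
    -- `g₃.ωᵢ = ωᵢ` for all `i`
    (ρ g3 (w1F K ζ) = w1F K ζ ∧ ρ g3 (w2F K ξ ζ) = w2F K ξ ζ ∧
      ρ g3 (w3F K ξ ζ) = w3F K ξ ζ ∧ ρ g3 (w4F K ζ) = w4F K ζ) ∧
    -- `g₂.ω₂ = ω₃`
    ρ g2 (w2F K ξ ζ) = w3F K ξ ζ ∧
    -- `G` acts simply transitively on `{η₁, η₂, η₃, η₄}`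
    (∀ η : GG → FirstAlg K ζ,
      (η g1 = e1F K ζ ∧ η g2 = e2F K ζ ∧ η g3 = e3F K ζ ∧ η g4 = e4F K ζ) →
      ∀ i j : GG, ρ i (η j) = η (i * j)) := by
  have hx := xF_pow_four K ζ
  have hρ := map_x_and_map_y hx hρ2x hρ2y hρ3x hρ3y
  have hx9 : (xF K ζ ^ 3) ^ 3 = xF K ζ := by
    rw [← pow_mul, pow_eq_pow_mod _ hx, pow_one]
  refine ⟨fun g ↦ ⟨map_one _, map_sq_eq hx (fun g ↦ (hρ g).1) g⟩,
    ⟨map_one _, ?_, ?_, map_sq_eq hx (fun g ↦ (hρ g).1) g3⟩, ?_, ?_⟩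
  · simp only [w2F, map_add, map_smul, map_pow, hρ3x]
  · simp only [w3F, map_add, map_smul, map_pow, hρ3x]
  · simp only [w2F, w3F, map_add, map_smul, map_pow, hρ2x, hx9, add_comm]
  · intro η hη i j
    rw [eq_xF_pow_etaExp_mul_yF hη, eq_xF_pow_etaExp_mul_yF hη, map_pow_etaExp_mul hx hρ]

theorem stmt_9 {K : Type*} [Field K] (ξ : K) (hξ : IsPrimitiveRoot ξ 8)
    (ζ : K) (hζ : ζ ^ 4 = 1)
    (ρ : GG →* (FirstAlg K ζ →ₐ[K] FirstAlg K ζ))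
    (hρ2x : ρ g2 (xF K ζ) = xF K ζ ^ 3) (hρ2y : ρ g2 (yF K ζ) = xF K ζ ^ 3 * yF K ζ)
    (hρ3x : ρ g3 (xF K ζ) = xF K ζ) (hρ3y : ρ g3 (yF K ζ) = xF K ζ ^ 2 * yF K ζ) :
    -- `ω₁` and `ω₄` are fixed points of the `G`-action
    (∀ g : GG, ρ g (w1F K ζ) = w1F K ζ ∧ ρ g (w4F K ζ) = w4F K ζ) ∧
    -- `g₃.ωᵢ = ωᵢ` for all `i`
    (ρ g3 (w1F K ζ) = w1F K ζ ∧ ρ g3 (w2F K ξ ζ) = w2F K ξ ζ ∧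
      ρ g3 (w3F K ξ ζ) = w3F K ξ ζ ∧ ρ g3 (w4F K ζ) = w4F K ζ) ∧
    -- `g₂.ω₂ = ω₃`
    ρ g2 (w2F K ξ ζ) = w3F K ξ ζ ∧
    -- `G` acts simply transitively on `{η₁, η₂, η₃, η₄}`
    (∀ η : GG → FirstAlg K ζ,
      (η g1 = e1F K ζ ∧ η g2 = e2F K ζ ∧ η g3 = e3F K ζ ∧ η g4 = e4F K ζ) →
      ∀ i j : GG, ρ i (η j) = η (i * j)) :=
  stmt_9_general ξ ζ ρ hρ2x hρ2y hρ3x hρ3y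
end

section
/- Let K be a field of characteristic ≠ 2 and ζ ∈ K with ζ⁴ = 1. Let B be a K-algebra containing elements x, y with x⁴ = 1, xy = yx³, and y² = (1/2)(ζ + x − ζx² + x³). Then y⁴ = 1 if ζ² = 1, and y⁴ = x² if ζ² = −1. -/
/- `aeval x` is a ring hom from the commutative ring `R[X]`, so the square can be expanded there
and reduced modulo `X ^ 4 - 1` even though `A` is noncommutative. -/
open Polynomial in
theorem smul_one_add_sub_smul_add_pow_three_sq {R A : Type*} [CommRing R] [Ring A] [Algebra R A]
    {x : A} (hx : x ^ 4 = 1) (c : R) :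
    (c • (1 : A) + x - c • x ^ 2 + x ^ 3) ^ 2 =
      (2 * c ^ 2 + 2) • (1 : A) + (2 - 2 * c ^ 2) • x ^ 2 := by
  have hpoly : (C c + X - C c * X ^ 2 + X ^ 3) ^ 2 =
      C (2 * c ^ 2 + 2) + C (2 - 2 * c ^ 2) * X ^ 2 +
        (X ^ 4 - 1) * (C c ^ 2 + 2 - 2 * C c * X + X ^ 2) := by
    simp only [map_add, map_sub, map_mul, map_pow, map_ofNat]
    ring
  simpa [Algebra.smul_def, hx] using congrArg (aeval x) hpoly

theorem stmt_11_general {K : Type*} [Field K] (hchar : ringChar K ≠ 2)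
    (ζ : K)
    {B : Type*} [Ring B] [Algebra K B] (x y : B)
    (hx : x ^ 4 = 1)
    (hy : y ^ 2 = (2 : K)⁻¹ • (ζ • (1 : B) + x - ζ • x ^ 2 + x ^ 3)) :
    (ζ ^ 2 = 1 → y ^ 4 = 1) ∧ (ζ ^ 2 = -1 → y ^ 4 = x ^ 2) := by
  have h4 : (4 : K) ≠ 0 := by
    rw [show (4 : K) = 2 ^ 2 by norm_num]
    exact pow_ne_zero 2 (Ring.two_ne_zero hchar)
  have hy4 : y ^ 4 = ((2 : K)⁻¹ ^ 2 * (2 * ζ ^ 2 + 2)) • (1 : B) +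
      ((2 : K)⁻¹ ^ 2 * (2 - 2 * ζ ^ 2)) • x ^ 2 := by
    rw [show y ^ 4 = (y ^ 2) ^ 2 by rw [← pow_mul], hy, smul_pow,
      smul_one_add_sub_smul_add_pow_three_sq hx, smul_add, smul_smul, smul_smul]
  refine ⟨fun hζ => ?_, fun hζ => ?_⟩ <;> rw [hy4, hζ] <;> norm_num [inv_mul_cancel₀ h4]

theorem stmt_11 {K : Type*} [Field K] (hchar : ringChar K ≠ 2)
    (ζ : K) (hζ : ζ ^ 4 = 1)
    {B : Type*} [Ring B] [Algebra K B] (x y : B)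
    (hx : x ^ 4 = 1) (hxy : x * y = y * x ^ 3)
    (hy : y ^ 2 = (2 : K)⁻¹ • (ζ • (1 : B) + x - ζ • x ^ 2 + x ^ 3)) :
    (ζ ^ 2 = 1 → y ^ 4 = 1) ∧ (ζ ^ 2 = -1 → y ^ 4 = x ^ 2) :=
  stmt_11_general hchar ζ x y hx hy
end
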